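/- arXiv:2411.02111 — 2 statements merged into one kernel-verified Lean document; each statement's English description precedes it below -/
import Mathlib

section
/- Let CG_n be the multigraph obtained from the cycle graph C_n with vertices p₁, …, p_n by replacing each edge e_i (joining p_i and p_{i+1}, indices mod n) by a connected multigraph G_i in which two distinguished vertices s_i and t_i are identified with the endpoints of e_i. Then t(CG_n) = ( ∏_{i=1}^{n} t(G_i) ) · Σ_{i=1}^{n} t(G_{i, s_i t_i})/t(G_i), where G_{i, s_i t_i} is obtained from G_i by identifying s_i and t_i. In particular, if every G_i is a copy of the same graph G with fixed vertices s, t, then t(CG_n) = n·t(G)^{n−1}·t(G_{st}). -/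
open scoped Classical

/-- A finite weighted multigraph (resistive electrical network): finitely many
vertices and edges; each edge `e` has two endpoints `ends e` and a positive
length (resistance) `len e`.  Multiple edges and self-loops are allowed. -/
structure WMG where
  V : Type
  E : Type
  instV : Fintype V
  instE : Fintype E
  ends : E → V × V
  len : E → ℝ
  len_pos : ∀ e, 0 < len e

attribute [instance] WMG.instV WMG.instE

/-- The Moore–Penrose pseudoinverse of a real square matrix, characterized by
the four Penrose equations (it exists and is unique for real matrices). -/
noncomputable def Matrix.mpinv {n : Type} [Fintype n] (A : Matrix n n ℝ) : Matrix n n ℝ :=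
  if h : ∃ B : Matrix n n ℝ,
      A * B * A = A ∧ B * A * B = B ∧ Matrix.transpose (A * B) = A * B ∧ Matrix.transpose (B * A) = B * A
  then h.choose else 0

namespace WMG

/-- Indicator function. -/
noncomputable def ind {α : Type} (x y : α) : ℝ := if x = y then 1 else 0

/-- The weighted Laplacian: an edge `e` with endpoints `a, b` contributes
`(1/len e) * (δ_{ua} - δ_{ub}) * (δ_{va} - δ_{vb})` to the `(u,v)` entry.  So
the off-diagonal `(u,v)` entry is `-∑ 1/len e` over the edges joining `u` and
`v`, and all row sums are zero. -/
noncomputable def lap (G : WMG) : Matrix G.V G.V ℝ :=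
  ∑ e : G.E, (G.len e)⁻¹ •
    Matrix.of (fun u v : G.V =>
      (ind u (G.ends e).1 - ind u (G.ends e).2) *
      (ind v (G.ends e).1 - ind v (G.ends e).2))

/-- Effective resistance `r(p,q) = L⁺pp - 2·L⁺pq + L⁺qq`. -/
noncomputable def res (G : WMG) (p q : G.V) : ℝ :=
  G.lap.mpinv p p - 2 * G.lap.mpinv p q + G.lap.mpinv q q

/-- Voltage function `j_p(q,s) = L⁺pp - L⁺pq - L⁺ps + L⁺qs`. -/
noncomputable def volt (G : WMG) (p q s : G.V) : ℝ :=
  G.lap.mpinv p p - G.lap.mpinv p q - G.lap.mpinv p s + G.lap.mpinv q s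

/-- Two vertices are adjacent if some edge has them as its endpoints. -/
def Adj (G : WMG) (u v : G.V) : Prop :=
  ∃ e : G.E, G.ends e = (u, v) ∨ G.ends e = (v, u)

/-- `u` and `v` are joined by a walk in `G`. -/
def Reach (G : WMG) (u v : G.V) : Prop := Relation.ReflTransGen G.Adj u v

/-- `G` is connected. -/
def Connected (G : WMG) : Prop := Nonempty G.V ∧ ∀ u v : G.V, G.Reach u v

/-- Quotient graph: identify vertices along (the equivalence generated by) the
relation `r`; all edges are kept. -/
noncomputable def quot (G : WMG) (r : G.V → G.V → Prop) : WMG where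
  V := Quot r
  E := G.E
  instV := Fintype.ofFinite _
  instE := G.instE
  ends e := (Quot.mk r (G.ends e).1, Quot.mk r (G.ends e).2)
  len := G.len
  len_pos := G.len_pos

/-- The canonical map from the vertices of `G` to those of a quotient of `G`. -/
def quotMap (G : WMG) (r : G.V → G.V → Prop) : G.V → (G.quot r).V := Quot.mk r

/-- `G_{pq}`: identify the vertices `p` and `q`. -/
noncomputable def ident2 (G : WMG) (p q : G.V) : WMG :=
  G.quot (fun x y => x = p ∧ y = q)

def ident2Map (G : WMG) (p q : G.V) : G.V → (G.ident2 p q).V :=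
  G.quotMap _

/-- `G_{pqs}`: identify the vertices `p`, `q`, `s` into a single vertex. -/
noncomputable def ident3 (G : WMG) (p q s : G.V) : WMG :=
  G.quot (fun x y => (x = p ∧ y = q) ∨ (x = p ∧ y = s))

/-- `G_{pq,st}`: identify `p` with `q` and, separately, `s` with `t`. -/
noncomputable def ident22 (G : WMG) (p q s t : G.V) : WMG :=
  G.quot (fun x y => (x = p ∧ y = q) ∨ (x = s ∧ y = t))

/-- `G_S`: identify all vertices in the set `S` into a single vertex. -/
noncomputable def identSet (G : WMG) (S : Set G.V) : WMG :=
  G.quot (fun x y => x ∈ S ∧ y ∈ S)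

/-- `G − e`: delete the edge `e` (keeping all vertices). -/
noncomputable def delete (G : WMG) (e : G.E) : WMG where
  V := G.V
  E := {f : G.E // f ≠ e}
  instV := G.instV
  instE := Fintype.ofFinite _
  ends f := G.ends f.1
  len f := G.len f.1
  len_pos f := G.len_pos f.1

/-- `e` is a bridge if `G − e` is disconnected. -/
def IsBridge (G : WMG) (e : G.E) : Prop := ¬ (G.delete e).Connected

/-- `Ḡ_e`: contract the edge `e` (identify its endpoints and delete it). -/
noncomputable def contract (G : WMG) (e : G.E) : WMG :=
  (G.delete e).quot (fun x y => x = (G.ends e).1 ∧ y = (G.ends e).2)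

def contractMap (G : WMG) (e : G.E) : G.V → (G.contract e).V := Quot.mk _

/-- Replace the length of the edge `e` by `L'`. -/
noncomputable def setLen (G : WMG) (e : G.E) (L' : ℝ) (hL' : 0 < L') : WMG where
  V := G.V
  E := G.E
  instV := G.instV
  instE := G.instE
  ends := G.ends
  len f := if f = e then L' else G.len f
  len_pos f := by
    by_cases hf : f = e
    · simpa [hf] using hL'
    · simpa [hf] using G.len_pos f

/-- `T` is (the edge set of) a spanning tree of `G`: using only edges of `T`
any two vertices are joined, and `T` has (number of vertices) − 1 edges. -/
def IsSpanningTree (G : WMG) (T : Finset G.E) : Prop :=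
  (∀ u v : G.V, Relation.ReflTransGen
      (fun x y => ∃ e ∈ T, G.ends e = (x, y) ∨ G.ends e = (y, x)) u v) ∧
  T.card = Fintype.card G.V - 1

/-- `t G`: the number of spanning trees of `G` (equals `1` for a one-vertex
graph; self-loops contribute nothing). -/
noncomputable def t (G : WMG) : ℕ := Nat.card {T : Finset G.E // G.IsSpanningTree T}

/-- `t(G_{pq})`, with the convention `t(G_{pp}) = 0`. -/
noncomputable def t2 (G : WMG) (p q : G.V) : ℕ :=
  if p = q then 0 else (G.ident2 p q).t

/-- Disjoint union of two graphs. -/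
noncomputable def disjUnion (G₁ G₂ : WMG) : WMG where
  V := G₁.V ⊕ G₂.V
  E := G₁.E ⊕ G₂.E
  instV := inferInstance
  instE := inferInstance
  ends := Sum.elim (fun e => (Sum.inl (G₁.ends e).1, Sum.inl (G₁.ends e).2))
                   (fun e => (Sum.inr (G₂.ends e).1, Sum.inr (G₂.ends e).2))
  len := Sum.elim G₁.len G₂.len
  len_pos := by
    rintro (e | e)
    · exact G₁.len_pos e
    · exact G₂.len_pos e

/-- Glue `G₁` and `G₂` along two pairs of vertices (`p₁ ↔ p₂`, `q₁ ↔ q₂`):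
the result is the graph `G = G₁ ∪ G₂` with `G₁ ∩ G₂ = {p, q}` (the two pieces
share exactly these two vertices and no edges). -/
noncomputable def glue2 (G₁ G₂ : WMG) (p₁ q₁ : G₁.V) (p₂ q₂ : G₂.V) : WMG :=
  (G₁.disjUnion G₂).quot (fun x y =>
    (x = Sum.inl p₁ ∧ y = Sum.inr p₂) ∨ (x = Sum.inl q₁ ∧ y = Sum.inr q₂))

/-- Glue `G₁` and `G₂` along three pairs of vertices: the result is the graph
`G = G₁ ∪ G₂` with `G₁ ∩ G₂ = {p, q, s}`. -/
noncomputable def glue3 (G₁ G₂ : WMG) (p₁ q₁ s₁ : G₁.V) (p₂ q₂ s₂ : G₂.V) : WMG :=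
  (G₁.disjUnion G₂).quot (fun x y =>
    (x = Sum.inl p₁ ∧ y = Sum.inr p₂) ∨ (x = Sum.inl q₁ ∧ y = Sum.inr q₂) ∨
    (x = Sum.inl s₁ ∧ y = Sum.inr s₂))

/-- Disjoint union of a finite family of graphs. -/
noncomputable def sigmaGraph {k : ℕ} (G : Fin k → WMG) : WMG where
  V := Σ i, (G i).V
  E := Σ i, (G i).E
  instV := inferInstance
  instE := inferInstance
  ends e := (⟨e.1, ((G e.1).ends e.2).1⟩, ⟨e.1, ((G e.1).ends e.2).2⟩)
  len e := (G e.1).len e.2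
  len_pos e := (G e.1).len_pos e.2

/-- Glue the family `G i` along a common pair of vertices (all the `p i` are
identified together, and all the `q i` are identified together): the result is
`G = ⋃ G_i` with `G_i ∩ G_j = {p, q}` for all `i ≠ j`. -/
noncomputable def glueFam {k : ℕ} (G : Fin k → WMG) (p q : ∀ i, (G i).V) : WMG :=
  (sigmaGraph G).quot (fun x y =>
    (∃ i j, x = ⟨i, p i⟩ ∧ y = ⟨j, p j⟩) ∨ (∃ i j, x = ⟨i, q i⟩ ∧ y = ⟨j, q j⟩))

/-- The cyclic successor on `Fin k`. -/
def finSucc {k : ℕ} (i : Fin k) : Fin k :=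
  ⟨(i.1 + 1) % k, Nat.mod_lt _ (Nat.lt_of_le_of_lt (Nat.zero_le _) i.2)⟩

/-- `CG_k`: replace the `i`-th edge of the cycle `C_k` by the graph `G i`,
identifying `t i` (of `G i`) with `s (i+1)` (of `G (i+1)`), cyclically. -/
noncomputable def cycleGlue {k : ℕ} (G : Fin k → WMG) (s t : ∀ i, (G i).V) : WMG :=
  (sigmaGraph G).quot (fun x y =>
    ∃ i, x = ⟨i, t i⟩ ∧ y = ⟨finSucc i, s (finSucc i)⟩)

/-- Join a new vertex `u` (the vertex `none`) to the vertex `p i` of `H` by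
`a i` parallel unit edges, for each `i`.  The resulting graph `G` has `H = G − u`,
and if `p` is injective with all `a i ≥ 1` then `N_G(u) = {p 1, …, p n}` with
`a i` parallel edges joining `u` to `p i`. -/
noncomputable def cone (H : WMG) {n : ℕ} (p : Fin n → H.V) (a : Fin n → ℕ) : WMG where
  V := Option H.V
  E := H.E ⊕ (Σ i : Fin n, Fin (a i))
  instV := inferInstance
  instE := inferInstance
  ends := Sum.elim (fun e => (some (H.ends e).1, some (H.ends e).2))
                   (fun e => (none, some (p e.1)))
  len := Sum.elim H.len (fun _ => 1)
  len_pos := by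
    rintro (e | e)
    · exact H.len_pos e
    · exact one_pos

/-- The path graph `P_n` on `n` vertices `0, 1, …, n-1`, unit edge lengths. -/
noncomputable def path (n : ℕ) : WMG where
  V := Fin n
  E := Fin (n - 1)
  instV := inferInstance
  instE := inferInstance
  ends i := (⟨i.1, by have := i.2; omega⟩, ⟨i.1 + 1, by have := i.2; omega⟩)
  len _ := 1
  len_pos _ := one_pos

/-- The cycle graph `C_n` on `n` vertices, unit edge lengths. -/
noncomputable def cycle (n : ℕ) : WMG where
  V := Fin n
  E := Fin n
  instV := inferInstance
  instE := inferInstance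
  ends i := (i, finSucc i)
  len _ := 1
  len_pos _ := one_pos

/-- The modified fan graph `F̄an_n`: the path `P_n` together with one new hub
vertex joined to each path vertex by `a` parallel edges. -/
noncomputable def fanGraph (n a : ℕ) : WMG :=
  (path n).cone (fun i : Fin n => i) (fun _ => a)

/-- The modified wheel graph `W̄_n`: the cycle `C_n` together with one new hub
vertex joined to each cycle vertex by `a` parallel edges. -/
noncomputable def wheelGraph (n a : ℕ) : WMG :=
  (cycle n).cone (fun i : Fin n => i) (fun _ => a)

end WMG

/-- The Morgan–Voyce polynomial `B_m(x) = ∑_{k=0}^m C(m+k+1, m−k) x^k`. -/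
noncomputable def morganVoyce (m : ℕ) (x : ℝ) : ℝ :=
  ∑ k ∈ Finset.range (m + 1), (Nat.choose (m + k + 1) (m - k) : ℝ) * x ^ k

/-- The polynomial `W_m(x) = ∑_{k=0}^m ((2m+2)/(m+2+k)) C(m+2+k, m−k) x^k`. -/
noncomputable def wheelPoly (m : ℕ) (x : ℝ) : ℝ :=
  ∑ k ∈ Finset.range (m + 1),
    ((2 * m + 2 : ℝ) / (m + 2 + k : ℝ)) * (Nat.choose (m + 2 + k) (m - k) : ℝ) * x ^ k

/-- The Lucas numbers: `L₀ = 2`, `L₁ = 1`, `L_{m+2} = L_m + L_{m+1}`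
(so `L₂ = 3`). -/
def lucas : ℕ → ℕ
  | 0 => 2
  | 1 => 1
  | n + 2 => lucas n + lucas (n + 1)

/-! Write an edge set `T` of `CG_n` as the family of its pieces `T_i ⊆ E(G_i)`. If `T` is a
spanning tree, collapsing everything outside `G_i` shows that `T_i` spans `G_{i, s_i t_i}`, and
since no edge of `T` is redundant, `T_i` is a spanning tree of `G_i` when it joins `s_i` to `t_i`
and of `G_{i, s_i t_i}` otherwise. Counting edges, `|T| = |V(CG_n)| - 1 = ∑ |V(G_i)| - n - 1`
forces exactly one piece to be of the second kind. Conversely every such family glues to a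
spanning tree of `CG_n`, so `t(CG_n) = ∑_i t(G_{i, s_i t_i}) ∏_{j ≠ i} t(G_j)`. -/

open Relation Finset

theorem Fintype.card_subtype_ne_add_one {α : Type} [Fintype α] (a : α) :
    Fintype.card {x : α // x ≠ a} + 1 = Fintype.card α := by
  have := Fintype.card_pos_iff.mpr ⟨a⟩
  rw [Fintype.card_subtype_compl, Fintype.card_subtype_eq]
  omega

namespace WMG

section EdgeAdj

variable {G : WMG}

def EdgeAdj (G : WMG) (T : Finset G.E) (x y : G.V) : Prop :=
  ∃ e ∈ T, G.ends e = (x, y) ∨ G.ends e = (y, x)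

def Spans (G : WMG) (T : Finset G.E) : Prop :=
  ∀ u v, ReflTransGen (G.EdgeAdj T) u v

instance (T : Finset G.E) : Std.Symm (G.EdgeAdj T) :=
  ⟨fun _ _ ⟨e, he, h⟩ => ⟨e, he, h.symm⟩⟩

theorem equivalence_reflTransGen_edgeAdj (T : Finset G.E) :
    Equivalence (ReflTransGen (G.EdgeAdj T)) :=
  ⟨fun _ => .refl, fun h => Std.Symm.symm _ _ h, .trans⟩

theorem EdgeAdj.mono {T T' : Finset G.E} (h : T ⊆ T') : G.EdgeAdj T ≤ G.EdgeAdj T' :=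
  fun _ _ ⟨e, he, hxy⟩ => ⟨e, h he, hxy⟩

theorem Spans.mono {T T' : Finset G.E} (hT : G.Spans T) (h : T ⊆ T') : G.Spans T' :=
  fun u v => ReflTransGen.mono (EdgeAdj.mono h) u v (hT u v)

theorem reflTransGen_ends {T : Finset G.E} {e : G.E} (he : e ∈ T) :
    ReflTransGen (G.EdgeAdj T) (G.ends e).1 (G.ends e).2 :=
  .single ⟨e, he, .inl rfl⟩

theorem reflTransGen_edgeAdj_map {H : WMG} (g : G.V → H.V) {T : Finset G.E} {T' : Finset H.E}
    (hT : ∀ e ∈ T, ReflTransGen (H.EdgeAdj T') (g (G.ends e).1) (g (G.ends e).2))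
    {u v : G.V} (huv : ReflTransGen (G.EdgeAdj T) u v) :
    ReflTransGen (H.EdgeAdj T') (g u) (g v) := by
  refine huv.lift' g fun x y ⟨e, he, hxy⟩ => ?_
  rcases hxy with hxy | hxy <;> have := hT e he <;> rw [hxy] at this
  · exact this
  · exact Std.Symm.symm _ _ this

theorem rel_of_reflTransGen_quot {r R : G.V → G.V → Prop} (hR : Equivalence R) (hr : r ≤ R)
    {T : Finset G.E} (hT : ∀ e ∈ T, R (G.ends e).1 (G.ends e).2) {u v : G.V}
    (huv : ReflTransGen ((G.quot r).EdgeAdj T) (Quot.mk r u) (Quot.mk r v)) : R u v := by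
  have hmk : ∀ x y, Quot.mk r x = Quot.mk r y → R x y := fun x y hxy =>
    hR.eqvGen_iff.mp ((Quot.eqvGen_exact hxy).mono hr)
  suffices ∀ Y, ReflTransGen ((G.quot r).EdgeAdj T) (Quot.mk r u) Y →
      ∀ w, Quot.mk r w = Y → R u w from this _ huv v rfl
  intro Y hY
  induction hY with
  | refl => exact fun w hw => hmk u w hw.symm
  | tail _ hstep ih =>
    obtain ⟨e, he, hends⟩ := hstep
    rintro w rfl
    rcases hends with h | h <;> obtain ⟨h₁, h₂⟩ := Prod.mk.inj h
    · exact hR.trans (ih _ h₁) (hR.trans (hT e he) (hmk _ _ h₂))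
    · exact hR.trans (ih _ h₂) (hR.trans (hR.symm (hT e he)) (hmk _ _ h₁))

theorem exists_mem_ends_ne_of_spans {T : Finset G.E} (hT : G.Spans T)
    (hV : 1 < Fintype.card G.V) : ∃ e ∈ T, (G.ends e).1 ≠ (G.ends e).2 := by
  by_contra! hloop
  obtain ⟨u, v, huv⟩ := Fintype.exists_pair_of_one_lt_card hV
  refine huv (reflTransGen_le_of_le (r := Eq) (fun x y ⟨e, he, hxy⟩ => ?_) _ _ (hT u v))
  rcases hxy with hxy | hxy <;> have := hloop e he <;> rw [hxy] at this
  · exact this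
  · exact this.symm

end EdgeAdj

section Ident2

noncomputable def ident2EquivNe (G : WMG) {p q : G.V} (hpq : p ≠ q) :
    (G.ident2 p q).V ≃ {v : G.V // v ≠ p} where
  toFun := Quot.lift (fun v => if hv : v = p then ⟨q, hpq.symm⟩ else ⟨v, hv⟩) (by
    rintro _ _ ⟨rfl, rfl⟩
    rw [dif_pos rfl, dif_neg hpq.symm])
  invFun v := Quot.mk _ v.1
  left_inv := Quot.ind fun v => by
    dsimp only
    split_ifs with hv
    · exact hv ▸ (Quot.sound ⟨rfl, rfl⟩).symm
    · rfl
  right_inv := fun ⟨_, hv⟩ => dif_neg hv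

variable {G : WMG} {p q : G.V} {T : Finset G.E}

theorem card_ident2_add_one (hpq : p ≠ q) :
    Fintype.card (G.ident2 p q).V + 1 = Fintype.card G.V := by
  rw [Fintype.card_congr (G.ident2EquivNe hpq), Fintype.card_subtype_ne_add_one]

theorem Spans.ident2_erase (hT : G.Spans T) {e : G.E} (he : e ∈ T) :
    (G.ident2 (G.ends e).1 (G.ends e).2).Spans (T.erase e) := by
  refine Quot.ind fun u => Quot.ind fun v =>
    reflTransGen_edgeAdj_map (H := G.ident2 _ _) (Quot.mk _) (fun f hf => ?_) (hT u v)
  by_cases hfe : f = e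
  · subst hfe
    rw [Quot.sound ⟨rfl, rfl⟩]
    exact .refl
  · exact reflTransGen_ends (G := G.ident2 _ _) (mem_erase.mpr ⟨hfe, hf⟩)

theorem spans_of_spans_ident2 (hT : (G.ident2 p q).Spans T)
    (hpq : ReflTransGen (G.EdgeAdj T) p q) : G.Spans T := fun u v =>
  rel_of_reflTransGen_quot (equivalence_reflTransGen_edgeAdj T)
    (by rintro _ _ ⟨rfl, rfl⟩; exact hpq) (fun _ => reflTransGen_ends)
    (hT (Quot.mk _ u) (Quot.mk _ v))

theorem reflTransGen_left_or_right_of_spans_ident2 (hT : (G.ident2 p q).Spans T) (v : G.V) :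
    ReflTransGen (G.EdgeAdj T) v p ∨ ReflTransGen (G.EdgeAdj T) v q := by
  let P x := ReflTransGen (G.EdgeAdj T) x p ∨ ReflTransGen (G.EdgeAdj T) x q
  have hPp : P p := .inl .refl
  refine (rel_of_reflTransGen_quot (R := fun x y => P x ↔ P y) ⟨fun _ => .rfl, Iff.symm, Iff.trans⟩
    ?_ (fun e he => ?_) (hT (Quot.mk _ p) (Quot.mk _ v))).mp hPp
  · rintro _ _ ⟨rfl, rfl⟩
    exact iff_of_true hPp (.inr .refl)
  · have hends := reflTransGen_ends he
    exact ⟨Or.imp (Std.Symm.symm _ _ hends).trans (Std.Symm.symm _ _ hends).trans,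
      Or.imp hends.trans hends.trans⟩

theorem reflTransGen_ends_of_spans_ident2 {T' : Finset G.E} (hT'T : T' ⊆ T)
    (hT' : (G.ident2 p q).Spans T') (hpq : ¬ ReflTransGen (G.EdgeAdj T) p q) {e : G.E}
    (he : e ∈ T) : ReflTransGen (G.EdgeAdj T') (G.ends e).1 (G.ends e).2 := by
  have hsymm {x y : G.V} : ReflTransGen (G.EdgeAdj T') x y → ReflTransGen (G.EdgeAdj T') y x :=
    Std.Symm.symm _ _
  have hmono {x y : G.V} : ReflTransGen (G.EdgeAdj T') x y → ReflTransGen (G.EdgeAdj T) x y :=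
    ReflTransGen.mono (EdgeAdj.mono hT'T) x y
  have hab := reflTransGen_ends he
  rcases reflTransGen_left_or_right_of_spans_ident2 hT' (G.ends e).1 with ha | ha <;>
    rcases reflTransGen_left_or_right_of_spans_ident2 hT' (G.ends e).2 with hb | hb
  · exact ha.trans (hsymm hb)
  · exact (hpq ((hmono (hsymm ha)).trans (hab.trans (hmono hb)))).elim
  · exact (hpq (Std.Symm.symm _ _ ((hmono (hsymm ha)).trans (hab.trans (hmono hb))))).elim
  · exact ha.trans (hsymm hb)

end Ident2

section SpanningTree

variable {G : WMG} {T : Finset G.E}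

theorem Spans.exists_subset_card_add_one [Nonempty G.V] (hT : G.Spans T) :
    ∃ T' ⊆ T, G.Spans T' ∧ #T' + 1 = Fintype.card G.V := by
  obtain ⟨k, hk⟩ : ∃ k, Fintype.card G.V = k + 1 := Nat.exists_eq_add_one.mpr Fintype.card_pos
  induction k generalizing G T with
  | zero =>
    have : Subsingleton G.V := Fintype.card_le_one_iff_subsingleton.mp hk.le
    exact ⟨∅, empty_subset _, fun u v => Subsingleton.elim u v ▸ .refl, by simp [hk]⟩
  | succ k ih =>
    obtain ⟨e, heT, hab⟩ := exists_mem_ends_ne_of_spans hT (by omega)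
    have hcard := card_ident2_add_one hab
    have : Nonempty (G.ident2 (G.ends e).1 (G.ends e).2).V := ⟨Quot.mk _ (G.ends e).1⟩
    obtain ⟨T', hT'T, hT', hT'card⟩ := ih (hT.ident2_erase heT) (by omega)
    have he : e ∉ T' := fun h => (mem_erase.mp (hT'T h)).1 rfl
    refine ⟨insert e T', insert_subset heT (hT'T.trans (erase_subset e T)),
      spans_of_spans_ident2 (hT'.mono (subset_insert e T'))
        (reflTransGen_ends (mem_insert_self e T')), ?_⟩
    rw [card_insert_of_notMem he]
    exact (congrArg (· + 1) hT'card).trans hcard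

theorem Spans.card_le (hT : G.Spans T) : Fintype.card G.V ≤ #T + 1 := by
  cases isEmpty_or_nonempty G.V
  · simp
  · obtain ⟨T', hT'T, -, hT'⟩ := hT.exists_subset_card_add_one
    have := card_le_card hT'T
    omega

theorem Spans.isSpanningTree (hT : G.Spans T) (hcard : #T + 1 = Fintype.card G.V) :
    G.IsSpanningTree T :=
  ⟨hT, by omega⟩

theorem IsSpanningTree.card_add_one [Nonempty G.V] (hT : G.IsSpanningTree T) :
    #T + 1 = Fintype.card G.V := by
  have := hT.2
  have := Fintype.card_pos (α := G.V)
  omega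

theorem IsSpanningTree.eq_of_subset {T' : Finset G.E} (hT : G.IsSpanningTree T) (hT'T : T' ⊆ T)
    (hT' : G.Spans T') : T' = T :=
  eq_of_subset_of_card_le hT'T (by have := hT'.card_le; have := hT.2; omega)

theorem IsSpanningTree.card_add_two_of_ident2 {p q : G.V} (hpq : p ≠ q)
    (hT : (G.ident2 p q).IsSpanningTree T) : #T + 2 = Fintype.card G.V := by
  have : Nonempty (G.ident2 p q).V := ⟨Quot.mk _ p⟩
  exact (congrArg (· + 1) hT.card_add_one).trans (card_ident2_add_one hpq)

theorem not_reflTransGen_of_isSpanningTree_ident2 {p q : G.V} (hpq : p ≠ q)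
    (hT : (G.ident2 p q).IsSpanningTree T) : ¬ ReflTransGen (G.EdgeAdj T) p q := fun h => by
  have := (spans_of_spans_ident2 hT.1 h).card_le
  have := hT.card_add_two_of_ident2 hpq
  omega

theorem Connected.t_pos (hG : G.Connected) : 0 < G.t := by
  have := hG.1
  have hspan : G.Spans univ := fun u v =>
    ReflTransGen.mono (r := G.Adj) (fun _ _ ⟨e, he⟩ => ⟨e, mem_univ e, he⟩) u v (hG.2 u v)
  obtain ⟨T, -, hT, hcard⟩ := hspan.exists_subset_card_add_one
  have : Nonempty {T // G.IsSpanningTree T} := ⟨⟨T, hT.isSpanningTree hcard⟩⟩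
  exact Nat.card_pos

end SpanningTree

section FinSucc

variable {n : ℕ}

theorem finSucc_ne (hn : 2 ≤ n) (i : Fin n) : finSucc i ≠ i := by
  intro h
  have hval : (i.1 + 1) % n = i.1 := congrArg Fin.val h
  rcases (show i.1 + 1 ≤ n from i.2).lt_or_eq with hlt | heq
  · rw [Nat.mod_eq_of_lt hlt] at hval; omega
  · rw [heq, Nat.mod_self] at hval; omega

theorem finSucc_eq_of_lt {k : ℕ} (hk : k + 1 < n) :
    finSucc (⟨k, by omega⟩ : Fin n) = ⟨k + 1, hk⟩ :=
  Fin.ext (Nat.mod_eq_of_lt hk)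

theorem finSucc_eq_zero {k : ℕ} (hk : k + 1 = n) :
    finSucc (⟨k, by omega⟩ : Fin n) = ⟨0, by omega⟩ :=
  Fin.ext (by simp [finSucc, hk])

theorem rel_of_rel_finSucc {α : Type} {R : α → α → Prop} (hR : Equivalence R) {x : Fin n → α}
    (i₀ : Fin n) (h : ∀ m, m ≠ i₀ → R (x m) (x (finSucc m))) (a b : Fin n) : R (x a) (x b) := by
  have hn : 0 < n := i₀.pos
  have hne {k : ℕ} (hk : k < n) (hki : k ≠ i₀.1) : (⟨k, hk⟩ : Fin n) ≠ i₀ :=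
    fun he => hki (congrArg Fin.val he)
  have up : ∀ k (hk : k ≤ i₀.1), R (x ⟨0, hn⟩) (x ⟨k, by omega⟩) := by
    intro k hk
    induction k with
    | zero => exact hR.refl _
    | succ k ih =>
      have hstep := h _ (hne (by omega) (by omega : k ≠ i₀.1))
      rw [finSucc_eq_of_lt (by omega)] at hstep
      exact hR.trans (ih (by omega)) hstep
  have down : ∀ d k (hk : i₀.1 < k) (hkn : k + d + 1 = n), R (x ⟨k, by omega⟩) (x ⟨0, hn⟩) := by
    intro d
    induction d with
    | zero =>
      intro k hk hkn
      simpa [finSucc_eq_zero (by omega : k + 1 = n)] using h _ (hne (by omega) hk.ne')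
    | succ d ih =>
      intro k hk hkn
      have hstep := h _ (hne (by omega) hk.ne')
      rw [finSucc_eq_of_lt (by omega)] at hstep
      exact hR.trans hstep (ih (k + 1) (by omega) (by omega))
  have from_zero (c : Fin n) : R (x ⟨0, hn⟩) (x c) := by
    rcases le_or_gt c.1 i₀.1 with hc | hc
    · exact up c.1 hc
    · exact hR.symm (down (n - c.1 - 1) c.1 hc (by omega))
  exact hR.trans (hR.symm (from_zero a)) (from_zero b)

end FinSucc

section Piece

variable {ι : Type} {E : ι → Type} [∀ i, Fintype (E i)]

noncomputable def piece (T : Finset (Σ i, E i)) (i : ι) : Finset (E i) := {e | ⟨i, e⟩ ∈ T}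

@[simp]
theorem mem_piece {T : Finset (Σ i, E i)} {i : ι} {e : E i} : e ∈ piece T i ↔ ⟨i, e⟩ ∈ T := by
  simp [piece]

theorem sigma_piece [Fintype ι] (T : Finset (Σ i, E i)) : univ.sigma (piece T) = T := by
  ext ⟨i, e⟩
  simp

@[simp]
theorem piece_sigma [Fintype ι] (f : ∀ i, Finset (E i)) (i : ι) :
    piece (univ.sigma f) i = f i := by
  ext e
  simp

theorem sum_card_piece [Fintype ι] (T : Finset (Σ i, E i)) : ∑ i, #(piece T i) = #T := by
  conv_rhs => rw [← sigma_piece T]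
  rw [card_sigma]

end Piece
section CycleGlue

variable {n : ℕ} {G : Fin n → WMG} {s t : ∀ i, (G i).V}

variable (G s t) in
def cycleGlueVert (i : Fin n) (v : (G i).V) : (cycleGlue G s t).V := Quot.mk _ ⟨i, v⟩

theorem cycleGlueVert_t (i : Fin n) :
    cycleGlueVert G s t i (t i) = cycleGlueVert G s t (finSucc i) (s (finSucc i)) :=
  Quot.sound ⟨i, rfl, rfl⟩

theorem reflTransGen_cycleGlue_of_piece {T : Finset (Σ i, (G i).E)} {i : Fin n} {u v : (G i).V}
    (huv : ReflTransGen ((G i).EdgeAdj (piece T i)) u v) :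
    ReflTransGen ((cycleGlue G s t).EdgeAdj T) (cycleGlueVert G s t i u)
      (cycleGlueVert G s t i v) :=
  reflTransGen_edgeAdj_map (H := cycleGlue G s t) (cycleGlueVert G s t i)
    (fun e he => .single ⟨⟨i, e⟩, mem_piece.mp he, .inl rfl⟩) huv

noncomputable def cycleGlueNormal (hst : ∀ i, s i ≠ t i) (x : Σ i, (G i).V) :
    Σ i, {v : (G i).V // v ≠ t i} :=
  if h : x.2 = t x.1 then ⟨finSucc x.1, s (finSucc x.1), hst _⟩ else ⟨x.1, x.2, h⟩

theorem cycleGlueNormal_t (hst : ∀ i, s i ≠ t i) (i : Fin n) :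
    cycleGlueNormal hst ⟨i, t i⟩ = ⟨finSucc i, s (finSucc i), hst _⟩ :=
  dif_pos rfl

theorem cycleGlueNormal_of_ne (hst : ∀ i, s i ≠ t i) {i : Fin n} {v : (G i).V} (hv : v ≠ t i) :
    cycleGlueNormal hst ⟨i, v⟩ = ⟨i, v, hv⟩ :=
  dif_neg hv

variable (G s t) in
noncomputable def cycleGlueEquiv (hst : ∀ i, s i ≠ t i) :
    (cycleGlue G s t).V ≃ Σ i, {v : (G i).V // v ≠ t i} where
  toFun := Quot.lift (cycleGlueNormal hst) (by
    rintro _ _ ⟨i, rfl, rfl⟩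
    rw [cycleGlueNormal_t, cycleGlueNormal_of_ne hst (hst _)])
  invFun x := cycleGlueVert G s t x.1 x.2.1
  left_inv := by
    refine Quot.ind fun ⟨i, v⟩ => ?_
    show cycleGlueVert G s t (cycleGlueNormal hst ⟨i, v⟩).1 (cycleGlueNormal hst ⟨i, v⟩).2.1 =
      cycleGlueVert G s t i v
    by_cases hv : v = t i
    · subst hv
      rw [cycleGlueNormal_t, cycleGlueVert_t]
    · rw [cycleGlueNormal_of_ne hst hv]
  right_inv := fun ⟨_, _, hv⟩ => cycleGlueNormal_of_ne hst hv

theorem card_cycleGlue_add (hst : ∀ i, s i ≠ t i) :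
    Fintype.card (cycleGlue G s t).V + n = ∑ i, Fintype.card (G i).V := by
  rw [Fintype.card_congr (cycleGlueEquiv G s t hst), Fintype.card_sigma]
  simp_rw [← Fintype.card_subtype_ne_add_one (t _), sum_add_distrib]
  simp

variable (G s t) in
noncomputable def cycleGlueProj (hn : 2 ≤ n) (i : Fin n) :
    (cycleGlue G s t).V → ((G i).ident2 (s i) (t i)).V :=
  Quot.lift
    (fun x => if h : x.1 = i then (G i).ident2Map (s i) (t i) (h ▸ x.2)
      else (G i).ident2Map (s i) (t i) (s i))
    (by
      rintro _ _ ⟨j, rfl, rfl⟩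
      dsimp only
      by_cases hj : j = i
      · subst hj
        rw [dif_pos rfl, dif_neg (finSucc_ne hn j)]
        exact (Quot.sound ⟨rfl, rfl⟩).symm
      · rw [dif_neg hj]
        by_cases hsj : finSucc j = i
        · subst hsj
          rw [dif_pos rfl]
        · rw [dif_neg hsj])

theorem cycleGlueProj_self (hn : 2 ≤ n) (i : Fin n) (v : (G i).V) :
    cycleGlueProj G s t hn i (cycleGlueVert G s t i v) = (G i).ident2Map (s i) (t i) v :=
  dif_pos rfl

theorem cycleGlueProj_of_ne (hn : 2 ≤ n) {i j : Fin n} (hj : j ≠ i) (v : (G j).V) :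
    cycleGlueProj G s t hn i (cycleGlueVert G s t j v) = (G i).ident2Map (s i) (t i) (s i) :=
  dif_neg hj

theorem spans_ident2_piece (hn : 2 ≤ n) {T : Finset (Σ i, (G i).E)}
    (hT : (cycleGlue G s t).Spans T) (i : Fin n) :
    ((G i).ident2 (s i) (t i)).Spans (piece T i) := by
  have hedge : ∀ e ∈ T, ReflTransGen (((G i).ident2 (s i) (t i)).EdgeAdj (piece T i))
      (cycleGlueProj G s t hn i ((cycleGlue G s t).ends e).1)
      (cycleGlueProj G s t hn i ((cycleGlue G s t).ends e).2) := by
    rintro ⟨j, e⟩ he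
    change ReflTransGen _ (cycleGlueProj G s t hn i (cycleGlueVert G s t j _))
      (cycleGlueProj G s t hn i (cycleGlueVert G s t j _))
    by_cases hj : j = i
    · subst hj
      rw [cycleGlueProj_self, cycleGlueProj_self]
      exact reflTransGen_ends (G := (G j).ident2 (s j) (t j)) (mem_piece.mpr he)
    · rw [cycleGlueProj_of_ne hn hj, cycleGlueProj_of_ne hn hj]
  refine Quot.ind fun u => Quot.ind fun v => ?_
  have := reflTransGen_edgeAdj_map _ hedge (hT (cycleGlueVert G s t i u) (cycleGlueVert G s t i v))
  rwa [cycleGlueProj_self, cycleGlueProj_self] at this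

theorem piece_eq_of_subset {T : Finset (Σ i, (G i).E)}
    (hT : (cycleGlue G s t).IsSpanningTree T) {i : Fin n} {T' : Finset (G i).E}
    (hT'T : T' ⊆ piece T i)
    (hT' : ∀ e ∈ piece T i, ReflTransGen ((G i).EdgeAdj T') ((G i).ends e).1 ((G i).ends e).2) :
    T' = piece T i := by
  set S := univ.sigma (Function.update (piece T) i T')
  have hSi : piece S i = T' := by simp [S]
  have hST : S ⊆ T := by
    rintro ⟨j, e⟩ he
    by_cases hj : j = i
    · subst hj
      simpa using hT'T (by simpa [S] using he)
    · simpa [S, hj] using he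
  have hS : (cycleGlue G s t).Spans S := fun X Y => by
    refine reflTransGen_edgeAdj_map (G := cycleGlue G s t) id (fun ⟨j, e⟩ he => ?_) (hT.1 X Y)
    by_cases hj : j = i
    · subst hj
      exact reflTransGen_cycleGlue_of_piece (hSi ▸ hT' e (mem_piece.mpr he))
    · refine reflTransGen_ends (G := cycleGlue G s t) (mem_sigma.mpr ⟨mem_univ j, ?_⟩)
      rw [Function.update_of_ne hj]
      exact mem_piece.mpr he
  rw [← hSi, hT.eq_of_subset hST hS]

theorem isSpanningTree_piece (hn : 2 ≤ n) {T : Finset (Σ i, (G i).E)}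
    (hT : (cycleGlue G s t).IsSpanningTree T) {i : Fin n}
    (hst : ReflTransGen ((G i).EdgeAdj (piece T i)) (s i) (t i)) :
    (G i).IsSpanningTree (piece T i) := by
  have : Nonempty (G i).V := ⟨s i⟩
  obtain ⟨T', hT'T, hT', hcard⟩ :=
    (spans_of_spans_ident2 (spans_ident2_piece hn hT.1 i) hst).exists_subset_card_add_one
  rw [← piece_eq_of_subset hT hT'T fun _ _ => hT' _ _]
  exact hT'.isSpanningTree hcard

theorem isSpanningTree_ident2_piece (hn : 2 ≤ n) {T : Finset (Σ i, (G i).E)}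
    (hT : (cycleGlue G s t).IsSpanningTree T) {i : Fin n}
    (hst : ¬ ReflTransGen ((G i).EdgeAdj (piece T i)) (s i) (t i)) :
    ((G i).ident2 (s i) (t i)).IsSpanningTree (piece T i) := by
  have : Nonempty ((G i).ident2 (s i) (t i)).V := ⟨Quot.mk _ (s i)⟩
  obtain ⟨T', hT'T, hT', hcard⟩ := (spans_ident2_piece hn hT.1 i).exists_subset_card_add_one
  rw [← piece_eq_of_subset hT hT'T fun _ he =>
    reflTransGen_ends_of_spans_ident2 (G := G i) hT'T hT' hst he]
  exact hT'.isSpanningTree hcard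

theorem card_add_card_eq_of_pieces (hst : ∀ i, s i ≠ t i) {T : Finset (Σ i, (G i).E)}
    (C : Finset (Fin n))
    (h : ∀ i, #(piece T i) + 1 + (if i ∈ C then 1 else 0) = Fintype.card (G i).V) :
    #T + #C = Fintype.card (cycleGlue G s t).V := by
  have hsum := sum_congr rfl fun i (_ : i ∈ univ) => h i
  rw [sum_add_distrib, sum_add_distrib, sum_card_piece, ← card_cycleGlue_add hst, sum_boole]
    at hsum
  simp only [sum_const, card_univ, Fintype.card_fin, smul_eq_mul, mul_one, subset_univ,
    filter_mem_eq_of_subset, Nat.cast_id] at hsum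
  omega

theorem exists_isSpanningTree_pieces (hn : 2 ≤ n) (hst : ∀ i, s i ≠ t i)
    {T : Finset (Σ i, (G i).E)} (hT : (cycleGlue G s t).IsSpanningTree T) :
    ∃ i₀, ((G i₀).ident2 (s i₀) (t i₀)).IsSpanningTree (piece T i₀) ∧
      ∀ j ≠ i₀, (G j).IsSpanningTree (piece T j) := by
  set C : Finset (Fin n) := {i | ¬ ReflTransGen ((G i).EdgeAdj (piece T i)) (s i) (t i)}
  have hcard : ∀ i, #(piece T i) + 1 + (if i ∈ C then 1 else 0) = Fintype.card (G i).V := by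
    intro i
    have : Nonempty (G i).V := ⟨s i⟩
    by_cases hi : ReflTransGen ((G i).EdgeAdj (piece T i)) (s i) (t i)
    · rw [if_neg (by simpa [C] using hi)]
      exact (isSpanningTree_piece hn hT hi).card_add_one
    · rw [if_pos (by simpa [C] using hi)]
      exact (isSpanningTree_ident2_piece hn hT hi).card_add_two_of_ident2 (hst i)
  have : Nonempty (cycleGlue G s t).V := ⟨cycleGlueVert G s t ⟨0, by omega⟩ (s _)⟩
  have hC1 : #C = 1 := by
    have := card_add_card_eq_of_pieces hst C hcard
    have : #T + 1 = Fintype.card (cycleGlue G s t).V := hT.card_add_one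
    omega
  obtain ⟨i₀, hC⟩ := card_eq_one.mp hC1
  have hcut : ∀ i, ¬ ReflTransGen ((G i).EdgeAdj (piece T i)) (s i) (t i) ↔ i = i₀ := fun i => by
    simpa [C] using Finset.ext_iff.mp hC i
  refine ⟨i₀, isSpanningTree_ident2_piece hn hT ((hcut i₀).mpr rfl), fun j hj => ?_⟩
  exact isSpanningTree_piece hn hT (not_not.mp (mt (hcut j).mp hj))

theorem isSpanningTree_of_pieces (hst : ∀ i, s i ≠ t i) {T : Finset (Σ i, (G i).E)} (i₀ : Fin n)
    (h₀ : ((G i₀).ident2 (s i₀) (t i₀)).IsSpanningTree (piece T i₀))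
    (hj : ∀ j ≠ i₀, (G j).IsSpanningTree (piece T j)) :
    (cycleGlue G s t).IsSpanningTree T := by
  set R := ReflTransGen ((cycleGlue G s t).EdgeAdj T)
  have hR : Equivalence R := equivalence_reflTransGen_edgeAdj (G := cycleGlue G s t) T
  have hjunction : ∀ a b, R (cycleGlueVert G s t a (s a)) (cycleGlueVert G s t b (s b)) :=
    rel_of_rel_finSucc hR i₀ fun m hm => by
      rw [← cycleGlueVert_t]
      exact reflTransGen_cycleGlue_of_piece ((hj m hm).1 (s m) (t m))
  have hvert : ∀ m v, ∃ m', R (cycleGlueVert G s t m v) (cycleGlueVert G s t m' (s m')) := by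
    intro m v
    by_cases hm : m = i₀
    · subst hm
      rcases reflTransGen_left_or_right_of_spans_ident2 h₀.1 v with h | h
      · exact ⟨m, reflTransGen_cycleGlue_of_piece h⟩
      · exact ⟨finSucc m, cycleGlueVert_t m ▸ reflTransGen_cycleGlue_of_piece h⟩
    · exact ⟨m, reflTransGen_cycleGlue_of_piece ((hj m hm).1 v (s m))⟩
  have hspan : (cycleGlue G s t).Spans T := by
    refine Quot.ind fun ⟨a, u⟩ => Quot.ind fun ⟨b, v⟩ => ?_
    obtain ⟨a', ha⟩ := hvert a u
    obtain ⟨b', hb⟩ := hvert b v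
    exact hR.trans ha (hR.trans (hjunction a' b') (hR.symm hb))
  refine hspan.isSpanningTree ?_
  have := card_add_card_eq_of_pieces (s := s) (t := t) (T := T) hst {i₀} fun i => ?_
  · rwa [card_singleton] at this
  · by_cases hi : i = i₀
    · subst hi
      rw [if_pos (mem_singleton_self _)]
      exact h₀.card_add_two_of_ident2 (hst i)
    · have : Nonempty (G i).V := ⟨s i⟩
      rw [if_neg (by simpa using hi)]
      exact (hj i hi).card_add_one

variable (G s t) in
def IsPieceTree (i₀ j : Fin n) (T : Finset (G j).E) : Prop :=
  if j = i₀ then ((G j).ident2 (s j) (t j)).IsSpanningTree T else (G j).IsSpanningTree T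

variable (G s t) in
noncomputable def cycleGlueTreeEquiv (hn : 2 ≤ n) (hst : ∀ i, s i ≠ t i) :
    (Σ i₀, ∀ j, {T // IsPieceTree G s t i₀ j T}) ≃
      {T // (cycleGlue G s t).IsSpanningTree T} := by
  refine Equiv.ofBijective (fun x => ⟨univ.sigma fun j => (x.2 j).1, ?_⟩) ⟨?_, ?_⟩
  · refine isSpanningTree_of_pieces hst x.1 ?_ fun j hj => ?_
    · simpa [IsPieceTree] using (x.2 x.1).2
    · simpa [IsPieceTree, hj] using (x.2 j).2
  · rintro ⟨i₁, f₁⟩ ⟨i₂, f₂⟩ hF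
    have hpieces : ∀ j, (f₁ j).1 = (f₂ j).1 := fun j => by
      simpa using congrArg (piece · j) (congrArg Subtype.val hF)
    obtain rfl : i₁ = i₂ := by
      by_contra hne
      have h₁ : ((G i₁).ident2 (s i₁) (t i₁)).IsSpanningTree (f₁ i₁).1 := by
        simpa [IsPieceTree] using (f₁ i₁).2
      have h₂ : (G i₁).IsSpanningTree (f₂ i₁).1 := by
        simpa [IsPieceTree, hne] using (f₂ i₁).2
      rw [← hpieces] at h₂
      exact not_reflTransGen_of_isSpanningTree_ident2 (hst i₁) h₁ (h₂.1 _ _)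
    obtain rfl : f₁ = f₂ := funext fun j => Subtype.ext (hpieces j)
    rfl
  · rintro ⟨T, hT⟩
    obtain ⟨i₀, h₀, hj⟩ := exists_isSpanningTree_pieces hn hst hT
    refine ⟨⟨i₀, fun j => ⟨piece T j, ?_⟩⟩, Subtype.ext (sigma_piece T)⟩
    unfold IsPieceTree
    split_ifs with h
    · exact h ▸ h₀
    · exact hj j h

theorem t_cycleGlue (hn : 2 ≤ n) (hst : ∀ i, s i ≠ t i) :
    (cycleGlue G s t).t = ∑ i, ((G i).ident2 (s i) (t i)).t * ∏ j ∈ univ.erase i, (G j).t := by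
  have hfactor (i₀ j : Fin n) : Fintype.card {T // IsPieceTree G s t i₀ j T} =
      if j = i₀ then ((G j).ident2 (s j) (t j)).t else (G j).t := by
    split_ifs with h <;> rw [WMG.t, Nat.card_eq_fintype_card] <;>
      exact Fintype.card_congr (Equiv.subtypeEquivRight fun T => by simp [IsPieceTree, h])
  rw [WMG.t, ← Nat.card_congr (cycleGlueTreeEquiv G s t hn hst), Nat.card_eq_fintype_card,
    Fintype.card_sigma]
  refine sum_congr rfl fun i₀ _ => ?_
  rw [Fintype.card_pi, ← mul_prod_erase univ _ (mem_univ i₀), hfactor, if_pos rfl]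
  congr 1
  exact prod_congr rfl fun j hj => by rw [hfactor, if_neg (ne_of_mem_erase hj)]

end CycleGlue

end WMG

/-- Let `CG_n` be obtained from the cycle `C_n` by replacing its `i`-th edge by
a connected multigraph `G_i`, whose distinguished vertices `s_i, t_i` are
identified with the endpoints of that edge.  Then
`t(CG_n) = (∏_i t(G_i)) ∑_i t(G_{i,s_i t_i})/t(G_i)`.  In particular, if each
`G_i` is a copy of the same graph `G₀` with fixed vertices `s, t`, then
`t(CG_n) = n ⬝ t(G₀)^{n-1} ⬝ t(G₀,_{st})`. -/
theorem spanning_trees_of_cycle_composition :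
    (∀ (n : ℕ), 2 ≤ n → ∀ (G : Fin n → WMG) (s t : ∀ i, (G i).V),
      (∀ i, (G i).Connected) → (∀ i, s i ≠ t i) →
      ((WMG.cycleGlue G s t).t : ℝ) =
        (∏ i, ((G i).t : ℝ)) *
          ∑ i, (((G i).ident2 (s i) (t i)).t : ℝ) / ((G i).t : ℝ)) ∧
    (∀ (n : ℕ), 2 ≤ n → ∀ (G₀ : WMG) (s₀ t₀ : G₀.V),
      G₀.Connected → s₀ ≠ t₀ →
      (WMG.cycleGlue (fun _ : Fin n => G₀) (fun _ => s₀) (fun _ => t₀)).t =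
        n * G₀.t ^ (n - 1) * (G₀.ident2 s₀ t₀).t) := by
  constructor
  · intro n hn G s t hconn hst
    rw [WMG.t_cycleGlue hn hst, mul_sum]
    push_cast
    refine sum_congr rfl fun i _ => ?_
    have hne : ((G i).t : ℝ) ≠ 0 := by exact_mod_cast (hconn i).t_pos.ne'
    rw [← mul_prod_erase univ (fun j => ((G j).t : ℝ)) (mem_univ i)]
    field_simp
  · intro n hn G₀ s₀ t₀ _ hst
    rw [WMG.t_cycleGlue hn fun _ => hst]
    simp only [prod_const, mem_univ, card_erase_of_mem, card_univ, Fintype.card_fin, sum_const,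
      smul_eq_mul]
    ring
end

section
/- Let G be a finite connected multigraph, let u be a vertex of G that is not a cut vertex, let N_G(u) = {p₁, …, p_n} with n ≥ 2 be the set of vertices adjacent to u, and suppose u is joined to p_i by a_i ≥ 1 parallel edges for each i. Let H = G − u be the graph obtained by deleting u and all edges incident to u. Then t(G) = (Σ_{i=1}^{n} a_i)·t(H) + Σ_{S ⊆ N_G(u), |S| ≥ 2} ( ∏_{i ∈ I_S} a_i )·t(H_S), where I_S is the set of indices of the vertices in S and H_S is the multigraph obtained from H by identifying all vertices in S into one vertex. -/
open scoped Classical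

/-!
A spanning tree `T'` of the cone `G = H + u` reaches the hub `u`, so it contains hub edges towards
`p i` for a nonempty set `S` of indices. Contracting these hub edges turns `T'` into a connected
spanning subgraph of `H_S`; since a spanning tree here is just a connecting edge set of size
`|V| - 1`, counting edges shows that `T'` uses exactly one of the `a i` parallel edges to each
`p i` with `i ∈ S`, and that its edges inside `H` form a spanning tree of `H_S`. Conversely every
such choice is a spanning tree of `G`, so `t(G) = ∑_{S ≠ ∅} (∏_{i ∈ S} a_i) t(H_S)`, and the
singletons `S = {i}` contribute `a_i t(H)`.
-/

namespace Finset

variable {ι : Type*} {β : ι → Type*} {S : Finset ι}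

def piGraph (g : (i : S) → β i) : Finset (Σ i, β i) :=
  (univ : Finset S).map ⟨fun i => ⟨i.1, g i⟩, fun _ _ h => Subtype.ext (congrArg Sigma.fst h)⟩

theorem mem_piGraph {g : (i : S) → β i} {i : ι} {j : β i} :
    ⟨i, j⟩ ∈ piGraph g ↔ ∃ h : i ∈ S, g ⟨i, h⟩ = j := by
  simp only [piGraph, mem_map, mem_univ, true_and, Subtype.exists]
  constructor
  · rintro ⟨i, hi, ⟨⟩⟩
    exact ⟨hi, rfl⟩
  · rintro ⟨hi, rfl⟩
    exact ⟨i, hi, rfl⟩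

theorem card_piGraph (g : (i : S) → β i) : (piGraph g).card = S.card := by
  simp [piGraph]

theorem image_fst_piGraph [DecidableEq ι] (g : (i : S) → β i) :
    (piGraph g).image Sigma.fst = S := by
  ext i
  simp [mem_piGraph]

theorem piGraph_injective : Function.Injective (piGraph (β := β) (S := S)) := by
  intro g g' h
  funext i
  obtain ⟨_, hg'⟩ := mem_piGraph.mp (h ▸ mem_piGraph.mpr ⟨i.2, rfl⟩ : ⟨i.1, g i⟩ ∈ piGraph g')
  exact hg'.symm

theorem exists_piGraph_eq [DecidableEq ι] {R : Finset (Σ i, β i)}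
    (hR : Set.InjOn Sigma.fst (R : Set (Σ i, β i))) :
    ∃ g : (i : R.image Sigma.fst) → β i, piGraph g = R := by
  have hex (i : R.image Sigma.fst) : ∃ j : β i, ⟨i.1, j⟩ ∈ R := by
    obtain ⟨⟨i, j⟩, hx, rfl⟩ := mem_image.mp i.2
    exact ⟨j, hx⟩
  choose g hg using hex
  refine ⟨g, ?_⟩
  ext ⟨i, j⟩
  rw [mem_piGraph]
  constructor
  · rintro ⟨hi, rfl⟩
    exact hg ⟨i, hi⟩
  · intro hx
    have hi : i ∈ R.image Sigma.fst := mem_image_of_mem _ hx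
    exact ⟨hi, eq_of_heq (Sigma.mk.inj_iff.mp (hR (hg ⟨i, hi⟩) hx rfl)).2⟩

end Finset

namespace WMG

open Relation Finset

def AdjVia (G : WMG) (T : Finset G.E) (x y : G.V) : Prop :=
  ∃ e ∈ T, G.ends e = (x, y) ∨ G.ends e = (y, x)

instance (G : WMG) (T : Finset G.E) : Std.Symm (G.AdjVia T) :=
  ⟨fun _ _ ⟨e, he, h⟩ => ⟨e, he, h.symm⟩⟩

theorem reflTransGen_adjVia_symm {G : WMG} {T : Finset G.E} {x y : G.V}
    (h : ReflTransGen (G.AdjVia T) x y) : ReflTransGen (G.AdjVia T) y x :=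
  symm h

def Connects (G : WMG) (T : Finset G.E) : Prop :=
  ∀ u v, ReflTransGen (G.AdjVia T) u v

theorem isSpanningTree_iff {G : WMG} {T : Finset G.E} :
    G.IsSpanningTree T ↔ G.Connects T ∧ T.card = Fintype.card G.V - 1 :=
  Iff.rfl

theorem t_eq_card_filter (G : WMG) : G.t = (univ.filter G.IsSpanningTree).card :=
  Nat.card_eq_fintype_card.trans (Fintype.card_subtype _)

theorem Connects.card_V_le_card_add_one {G : WMG} {T : Finset G.E} (hT : G.Connects T) :
    Fintype.card G.V ≤ T.card + 1 := by
  cases isEmpty_or_nonempty G.V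
  · simp
  let s : Set (Sym2 G.V) := (fun e => s((G.ends e).1, (G.ends e).2)) '' T
  have hrel : Sym2.ToRel s = G.AdjVia T := by
    ext x y
    simp [s, AdjVia, Prod.ext_iff]
  have hconn : (SimpleGraph.fromEdgeSet s).Connected := by
    rw [SimpleGraph.connected_iff, SimpleGraph.Preconnected,
      SimpleGraph.reachable_fromEdgeSet_eq_reflTransGen_toRel, hrel]
    exact ⟨hT, inferInstance⟩
  calc Fintype.card G.V = Nat.card G.V := Nat.card_eq_fintype_card.symm
    _ ≤ Nat.card (SimpleGraph.fromEdgeSet s).edgeSet + 1 :=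
      hconn.card_vert_le_card_edgeSet_add_one
    _ ≤ T.card + 1 := by
      gcongr
      rw [SimpleGraph.edgeSet_fromEdgeSet, Nat.card_coe_set_eq]
      calc (s \ Sym2.diagSet).ncard ≤ s.ncard :=
            Set.ncard_le_ncard Set.sdiff_subset (T.finite_toSet.image _)
        _ ≤ (T : Set G.E).ncard := Set.ncard_image_le T.finite_toSet
        _ = T.card := Set.ncard_coe_finset T

theorem reflTransGen_quot_mk_iff (G : WMG) (r : G.V → G.V → Prop) (T : Finset (G.quot r).E)
    (x y : G.V) :
    ReflTransGen ((G.quot r).AdjVia T) (Quot.mk r x) (Quot.mk r y) ↔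
      EqvGen (G.AdjVia T ⊔ r) x y := by
  constructor
  · let π : Quot r → Quotient (EqvGen.setoid (G.AdjVia T ⊔ r)) :=
      Quot.lift (Quotient.mk _) fun x y h => Quotient.sound (EqvGen.rel _ _ (Or.inr h))
    have hπ : ∀ c d, ReflTransGen ((G.quot r).AdjVia T) c d → π c = π d := by
      intro c d h
      induction h with
      | refl => rfl
      | tail _ hcd ih =>
        obtain ⟨e, he, hends⟩ := hcd
        have hedge : π (Quot.mk r (G.ends e).1) = π (Quot.mk r (G.ends e).2) :=
          Quotient.sound (EqvGen.rel _ _ (Or.inl ⟨e, he, Or.inl rfl⟩))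
        rcases hends with hends | hends <;> simp only [quot, Prod.ext_iff] at hends <;>
          rw [ih, ← hends.1, ← hends.2, hedge]
    exact fun h => Quotient.exact (hπ _ _ h)
  · intro h
    induction h with
    | rel x y hxy =>
      rcases hxy with ⟨e, he, hends⟩ | hr
      · exact .single ⟨e, he, by rcases hends with h | h <;> simp [quot, h]⟩
      · exact Quot.sound hr ▸ .refl
    | refl => rfl
    | symm _ _ _ ih => exact reflTransGen_adjVia_symm ih
    | trans _ _ _ _ _ ih₁ ih₂ => exact ih₁.trans ih₂

theorem connects_quot_iff (G : WMG) (r : G.V → G.V → Prop) (T : Finset (G.quot r).E) :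
    (G.quot r).Connects T ↔ ∀ x y, EqvGen (G.AdjVia T ⊔ r) x y := by
  refine ⟨fun h x y => (G.reflTransGen_quot_mk_iff r T x y).mp (h _ _), fun h c d => ?_⟩
  induction c using Quot.ind
  induction d using Quot.ind
  exact (G.reflTransGen_quot_mk_iff r T _ _).mpr (h _ _)

noncomputable def identSetEquiv (G : WMG) {A : Set G.V} {a₀ : G.V} (h₀ : a₀ ∈ A) :
    (G.identSet A).V ≃ Option {v // v ∉ A} where
  toFun := Quot.lift (fun v => if h : v ∈ A then none else some ⟨v, h⟩)
    fun x y hxy => by simp [hxy.1, hxy.2]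
  invFun
    | none => Quot.mk _ a₀
    | some v => Quot.mk _ v.1
  left_inv := Quot.ind fun v => by
    by_cases hv : v ∈ A
    · simp only [hv, dite_true]
      exact Quot.sound ⟨h₀, hv⟩
    · simp only [hv, dite_false]
      rfl
  right_inv := by
    rintro (_ | ⟨v, hv⟩)
    · simp [h₀]
    · simp [hv]

theorem card_identSet_add_card (G : WMG) {A : Finset G.V} (hA : A.Nonempty) :
    Fintype.card (G.identSet A).V + A.card = Fintype.card G.V + 1 := by
  obtain ⟨a₀, h₀⟩ := hA
  rw [Fintype.card_congr (G.identSetEquiv (A := A) h₀), Fintype.card_option,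
    Fintype.card_subtype_compl]
  simp only [Finset.mem_coe, Fintype.card_coe]
  have := A.card_le_univ
  omega

theorem t_identSet_singleton (G : WMG) (v : G.V) : (G.identSet {v}).t = G.t := by
  have hcard : Fintype.card (G.identSet {v}).V = Fintype.card G.V := by
    simpa using G.card_identSet_add_card (Finset.singleton_nonempty v)
  have hconn (T : Finset G.E) : (G.identSet {v}).Connects T ↔ G.Connects T := by
    have hgen : EqvGen (G.AdjVia T ⊔ fun x y => x ∈ ({v} : Set G.V) ∧ y ∈ ({v} : Set G.V)) =
        ReflTransGen (G.AdjVia T) := by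
      have : IsEquiv G.V (ReflTransGen (G.AdjVia T)) := ⟨⟩
      refine le_antisymm (EqvGen.eqvGen_le (sup_le ReflTransGen.le_reflTransGen ?_))
        ((EqvGen.reflTransGen_le_eqvGen _).trans (EqvGen.eqvGen_mono le_sup_left))
      rintro x y ⟨rfl, rfl⟩
      exact .refl
    refine (G.connects_quot_iff _ T).trans ?_
    rw [hgen]
    rfl
  exact Nat.card_congr (Equiv.subtypeEquivRight fun T => isSpanningTree_iff.trans
    ((and_congr (hconn T) (by rw [hcard]; exact Iff.rfl)).trans isSpanningTree_iff.symm))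

variable {H : WMG} {n : ℕ} {p : Fin n → H.V} {a : Fin n → ℕ}

theorem card_identSet_image (hp : Function.Injective p) {S : Finset (Fin n)} (hS : S.Nonempty) :
    Fintype.card (H.identSet {v | ∃ i ∈ S, v = p i}).V + S.card = Fintype.card H.V + 1 := by
  have hA : {v | ∃ i ∈ S, v = p i} = ((S.image p : Finset H.V) : Set H.V) := by
    ext v
    simp [eq_comm]
  rw [hA, ← card_image_of_injective S hp]
  exact H.card_identSet_add_card (hS.image p)

theorem card_cone_V : Fintype.card (H.cone p a).V = Fintype.card H.V + 1 :=
  Fintype.card_option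

variable (p a) in
def coneTree {S : Finset (Fin n)} (g : (i : S) → Fin (a i)) (T : Finset H.E) :
    Finset (H.cone p a).E :=
  T.disjSum (piGraph g)

theorem card_coneTree {S : Finset (Fin n)} (g : (i : S) → Fin (a i)) (T : Finset H.E) :
    (coneTree p a g T).card = T.card + S.card :=
  (card_disjSum _ _).trans (congrArg _ (card_piGraph (β := fun i => Fin (a i)) g))

theorem connects_coneTree {S : Finset (Fin n)} (hS : S.Nonempty) (g : (i : S) → Fin (a i))
    {T : Finset H.E} (hT : (H.identSet {v | ∃ i ∈ S, v = p i}).Connects T) :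
    (H.cone p a).Connects (coneTree p a g T) := by
  set T' := coneTree p a g T
  have hub (i : Fin n) (hi : i ∈ S) : (H.cone p a).AdjVia T' none (some (p i)) :=
    ⟨.inr ⟨i, g ⟨i, hi⟩⟩, inr_mem_disjSum.mpr (mem_piGraph.mpr ⟨hi, rfl⟩), .inl rfl⟩
  let Q (x y : H.V) : Prop := ReflTransGen ((H.cone p a).AdjVia T') (some x) (some y)
  have hQ : Equivalence Q := ⟨fun _ => .refl, reflTransGen_adjVia_symm, .trans⟩
  have hgen : H.AdjVia T ⊔
      (fun x y => x ∈ {v | ∃ i ∈ S, v = p i} ∧ y ∈ {v | ∃ i ∈ S, v = p i}) ≤ Q := by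
    refine sup_le ?_ ?_
    · rintro x y ⟨e, he, hends⟩
      refine .single ⟨.inl e, inl_mem_disjSum.mpr he, ?_⟩
      rcases hends with h | h <;> simp [cone, h]
    · rintro x y ⟨⟨i, hi, rfl⟩, ⟨j, hj, rfl⟩⟩
      exact (reflTransGen_adjVia_symm (.single (hub i hi))).tail (hub j hj)
  have hsome (x y : H.V) : Q x y :=
    hQ.eqvGen_iff.mp (EqvGen.mono hgen _ _ ((H.connects_quot_iff _ T).mp hT x y))
  obtain ⟨i₀, hi₀⟩ := hS
  rintro (_ | x) (_ | y)
  · exact .refl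
  · exact (ReflTransGen.single (hub i₀ hi₀)).trans (hsome _ y)
  · exact reflTransGen_adjVia_symm ((ReflTransGen.single (hub i₀ hi₀)).trans (hsome _ x))
  · exact hsome x y

theorem isSpanningTree_coneTree (hp : Function.Injective p) {S : Finset (Fin n)}
    (hS : S.Nonempty) (g : (i : S) → Fin (a i)) {T : Finset H.E}
    (hT : (H.identSet {v | ∃ i ∈ S, v = p i}).IsSpanningTree T) :
    (H.cone p a).IsSpanningTree (coneTree p a g T) := by
  refine ⟨connects_coneTree hS g hT.1, ?_⟩
  have hcard : T.card = _ := hT.2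
  have hpos : 0 < Fintype.card (H.identSet {v | ∃ i ∈ S, v = p i}).V :=
    Fintype.card_pos_iff.mpr ⟨Quot.mk _ (p hS.choose)⟩
  have := card_identSet_image hp hS
  rw [card_coneTree, card_cone_V]
  omega

theorem toRight_nonempty_of_connects [Nonempty H.V] {T' : Finset (H.cone p a).E}
    (hT' : (H.cone p a).Connects T') : T'.toRight.Nonempty := by
  obtain ⟨v⟩ := ‹Nonempty H.V›
  obtain h | ⟨_, ⟨e, he, hends⟩, -⟩ := (hT' none (some v)).cases_head
  · exact absurd h (Option.some_ne_none v).symm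
  · rcases e with f | x
    · rcases hends with h | h
      · exact absurd (congrArg Prod.fst h) (Option.some_ne_none _)
      · exact absurd (congrArg Prod.snd h) (Option.some_ne_none _)
    · exact ⟨x, mem_toRight.mpr he⟩

theorem connects_identSet_toLeft {T' : Finset (H.cone p a).E} (hT' : (H.cone p a).Connects T')
    {S : Finset (Fin n)} (hS : ∀ x ∈ T'.toRight, x.1 ∈ S) {i₀ : Fin n} (hi₀ : i₀ ∈ S) :
    (H.identSet {v | ∃ i ∈ S, v = p i}).Connects T'.toLeft := by
  let r (x y : H.V) : Prop := x ∈ {v | ∃ i ∈ S, v = p i} ∧ y ∈ {v | ∃ i ∈ S, v = p i}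
  let φ : (H.cone p a).V → (H.identSet {v | ∃ i ∈ S, v = p i}).V
    | none => Quot.mk r (p i₀)
    | some v => Quot.mk r v
  have hstep : (H.cone p a).AdjVia T' ≤ fun u v =>
      ReflTransGen ((H.identSet {v | ∃ i ∈ S, v = p i}).AdjVia T'.toLeft) (φ u) (φ v) := by
    rintro u v ⟨f | ⟨i, j⟩, he, hends⟩
    · have hf : f ∈ T'.toLeft := mem_toLeft.mpr he
      rcases hends with h | h <;> obtain ⟨rfl, rfl⟩ := Prod.ext_iff.mp h
      · exact .single ⟨f, hf, .inl rfl⟩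
      · exact .single ⟨f, hf, .inr rfl⟩
    · have hi : φ none = φ (some (p i)) :=
        Quot.sound ⟨⟨i₀, hi₀, rfl⟩, ⟨i, hS _ (mem_toRight.mpr he), rfl⟩⟩
      rcases hends with h | h <;> obtain ⟨rfl, rfl⟩ := Prod.ext_iff.mp h
      · exact hi ▸ .refl
      · exact hi ▸ .refl
  intro c d
  induction c using Quot.ind with | mk x => ?_
  induction d using Quot.ind with | mk y => ?_
  exact ReflTransGen.lift' φ hstep _ _ (hT' (some x) (some y))

theorem exists_coneTree_eq [Nonempty H.V] (hp : Function.Injective p)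
    {T' : Finset (H.cone p a).E} (hT' : (H.cone p a).IsSpanningTree T') :
    ∃ S : Finset (Fin n), ∃ g : (i : S) → Fin (a i), ∃ T : Finset H.E, S.Nonempty ∧
      (H.identSet {v | ∃ i ∈ S, v = p i}).IsSpanningTree T ∧ coneTree p a g T = T' := by
  obtain ⟨hconn, hcard⟩ := hT'
  set S := T'.toRight.image Sigma.fst
  obtain ⟨x₀, hx₀⟩ := toRight_nonempty_of_connects hconn
  have hS : S.Nonempty := ⟨x₀.1, mem_image_of_mem _ hx₀⟩
  have hconnS :=
    connects_identSet_toLeft hconn (S := S) (fun x hx => mem_image_of_mem _ hx) hS.choose_spec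
  -- Connectivity of `H_S` needs `|H_S| - 1` edges of `H`, which leaves room for only `|S|` hub
  -- edges: no two of them go to the same `p i`.
  have hle : Fintype.card (H.identSet {v | ∃ i ∈ S, v = p i}).V ≤ T'.toLeft.card + 1 :=
    hconnS.card_V_le_card_add_one
  have hV := card_identSet_image hp hS
  have hsplit : T'.toLeft.card + T'.toRight.card = T'.card := card_toLeft_add_card_toRight
  have hcone := card_cone_V (p := p) (a := a)
  have hSR : S.card ≤ T'.toRight.card := card_image_le
  have hRS : S.card = T'.toRight.card := by omega
  obtain ⟨g, hg⟩ := exists_piGraph_eq (card_image_iff.mp hRS)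
  have hcardS : T'.toLeft.card = Fintype.card (H.identSet {v | ∃ i ∈ S, v = p i}).V - 1 := by
    omega
  refine ⟨S, g, T'.toLeft, hS, ⟨hconnS, hcardS⟩, ?_⟩
  rw [coneTree, hg]
  exact toLeft_disjSum_toRight

theorem coneTree_injective :
    Function.Injective fun x : Σ S : Finset (Fin n), ((i : S) → Fin (a i)) × Finset H.E =>
      coneTree p a x.2.1 x.2.2 := by
  rintro ⟨S, g, T⟩ ⟨S', g', T'⟩ h
  have hT : T = T' := by simpa [coneTree] using congrArg toLeft h
  have hg : piGraph (β := fun i => Fin (a i)) g = piGraph g' := by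
    simpa [coneTree] using congrArg toRight h
  obtain rfl : S = S' := by simpa [image_fst_piGraph] using congrArg (image Sigma.fst) hg
  obtain rfl := piGraph_injective (β := fun i => Fin (a i)) hg
  rw [hT]

theorem t_cone [Nonempty H.V] (hp : Function.Injective p) :
    (H.cone p a).t = ∑ S ∈ univ.filter (fun S : Finset (Fin n) => S.Nonempty),
      (∏ i ∈ S, a i) * (H.identSet {v | ∃ i ∈ S, v = p i}).t := by
  have himage : univ.filter (H.cone p a).IsSpanningTree =
      ((univ.filter Finset.Nonempty).sigma fun S : Finset (Fin n) =>
        (univ : Finset ((i : S) → Fin (a i))) ×ˢ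
          univ.filter fun T : Finset H.E =>
            (H.identSet {v | ∃ i ∈ S, v = p i}).IsSpanningTree T).image
        fun x => coneTree p a x.2.1 x.2.2 := by
    ext T'
    simp only [mem_filter, mem_univ, true_and, mem_image, mem_sigma, mem_product,
      Sigma.exists, Prod.exists]
    constructor
    · intro hT'
      obtain ⟨S, g, T, hS, hT, rfl⟩ := exists_coneTree_eq hp hT'
      exact ⟨S, g, T, ⟨hS, hT⟩, rfl⟩
    · rintro ⟨S, g, T, ⟨hS, hT⟩, rfl⟩
      exact isSpanningTree_coneTree hp hS g hT
  rw [t_eq_card_filter, himage, card_image_of_injective _ coneTree_injective, card_sigma]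
  refine sum_congr rfl fun S _ => ?_
  rw [card_product, card_univ, Fintype.card_pi, t_eq_card_filter]
  simp only [Fintype.card_fin, prod_coe_sort]
  rfl

end WMG

theorem spanning_trees_vertex_deletion_general (H : WMG)
    (n : ℕ) (hn : 2 ≤ n) (p : Fin n → H.V) (hp : Function.Injective p)
    (a : Fin n → ℕ) :
    (H.cone p a).t =
      (∑ i, a i) * H.t +
        ∑ S ∈ Finset.univ.filter (fun S : Finset (Fin n) => 2 ≤ S.card),
          (∏ i ∈ S, a i) * (H.identSet {v | ∃ i ∈ S, v = p i}).t := by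
  have : Nonempty H.V := ⟨p ⟨0, by omega⟩⟩
  have hsplit : Finset.univ.filter (fun S : Finset (Fin n) => S.Nonempty) =
      Finset.univ.filter (fun S => S.card = 1) ∪ Finset.univ.filter (fun S => 2 ≤ S.card) := by
    ext S
    simp only [Finset.mem_filter, Finset.mem_univ, true_and, Finset.mem_union,
      ← Finset.card_pos]
    omega
  rw [WMG.t_cone hp, hsplit,
    Finset.sum_union (Finset.disjoint_filter.mpr fun S _ h => by omega)]
  congr 1
  rw [Finset.univ_filter_card_eq, Finset.powersetCard_one, Finset.sum_map, Finset.sum_mul]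
  refine Finset.sum_congr rfl fun i _ => ?_
  simp [WMG.t_identSet_singleton]

/-- Let `G` be a finite connected multigraph, `u` a non-cut vertex whose
neighbours are the distinct vertices `p 1, …, p n` (`n ≥ 2`), joined to `u` by
`a i ≥ 1` parallel edges respectively, and `H = G − u` (which is connected).
Then `t(G) = (∑ a_i) t(H) + ∑_{S ⊆ N_G(u), |S| ≥ 2} (∏_{i ∈ I_S} a_i) t(H_S)`,
where `H_S` is `H` with all the vertices of `S` identified.  (Here `G` is
realized as the cone `H.cone p a` over `H`.) -/
theorem spanning_trees_vertex_deletion (H : WMG) (hH : H.Connected)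
    (n : ℕ) (hn : 2 ≤ n) (p : Fin n → H.V) (hp : Function.Injective p)
    (a : Fin n → ℕ) (ha : ∀ i, 1 ≤ a i) :
    (H.cone p a).t =
      (∑ i, a i) * H.t +
        ∑ S ∈ Finset.univ.filter (fun S : Finset (Fin n) => 2 ≤ S.card),
          (∏ i ∈ S, a i) * (H.identSet {v | ∃ i ∈ S, v = p i}).t :=
  spanning_trees_vertex_deletion_general H n hn p hp a
end
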